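/- The lamplighter group C₂ ≀ C_∞ = (⊕_{n∈ℤ} ℤ/2ℤ) ⋊ ℤ has asymptotic dimension 1. -/

import Mathlib

def cayley (G : Type*) [Group G] (X : Set G) : SimpleGraph G :=
  SimpleGraph.fromRel (fun g h => ∃ x ∈ X, h = g * x)

def AsdimLE {V : Type*} (G : SimpleGraph V) (n : ℕ) : Prop :=
  ∀ m : ℕ, 0 < m → ∃ (ι : Type) (f : V → ι) (col : ι → Fin (n + 1)) (D : ℕ),
    (∀ u v : V, f u = f v → G.dist u v ≤ D) ∧
    (∀ u v : V, f u ≠ f v → col (f u) = col (f v) → m < G.dist u v)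

def GroupAsdimLE (G : Type*) [Group G] (n : ℕ) : Prop :=
  ∀ X : Finset G, Subgroup.closure (X : Set G) = ⊤ → AsdimLE (cayley G (X : Set G)) n

/-- The shift action of `ℤ` on `⊕_{n ∈ ℤ} ℤ/2ℤ` (finitely supported functions),
translating coordinates. -/
noncomputable def lampShift : Multiplicative ℤ →* MulAut (Multiplicative (ℤ →₀ ZMod 2)) :=
  MonoidHom.mk'
    (fun n => AddEquiv.toMultiplicative (Finsupp.domCongr (Equiv.addRight n.toAdd)))
    (by
      intro a b
      ext f i
      show Finsupp.equivMapDomain _ _ i = Finsupp.equivMapDomain _ (Finsupp.equivMapDomain _ _) i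
      simp [Finsupp.equivMapDomain_apply, Equiv.addRight, sub_sub, add_assoc, add_comm,
        add_left_comm])

/-- The lamplighter group `C₂ ≀ C_∞ = (⊕_{n ∈ ℤ} ℤ/2ℤ) ⋊ ℤ`. -/
abbrev Lamplighter : Type :=
  SemidirectProduct (Multiplicative (ℤ →₀ ZMod 2)) (Multiplicative ℤ) lampShift

/-!
Let `K` bound both how far a generator moves the lamplighter and how far from it a generator
toggles lamps. Then the position of the lamplighter is `K`-Lipschitz, and a lamp on which `u` and
`v` differ lies within `K d(u, v) + 2K` of the position of `u`, since some edge of a geodesic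
toggles it. Cut `ℤ` into blocks of length `L = K m + 1` and put `u` into the cell recording the
block of its position and all its lamps at distance more than `R = K m + 2K` from that block.
A cell is a translate of a finite set, hence bounded; two different cells whose blocks have the
same parity are more than `m` apart, so the parity of the block is a 2-colouring.
-/

namespace SimpleGraph

variable {V V' : Type*} {G : SimpleGraph V} {G' : SimpleGraph V'} {u v : V}

theorem Walk.natAbs_sub_le_mul_length {f : V → ℤ} {K : ℕ}
    (hf : ∀ a b, G.Adj a b → (f a - f b).natAbs ≤ K) (w : G.Walk u v) :
    (f u - f v).natAbs ≤ K * w.length := by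
  induction w with
  | nil => simp
  | cons h w ih =>
    have := hf _ _ h
    rw [length_cons, mul_add_one]
    omega

theorem Reachable.natAbs_sub_le_mul_dist {f : V → ℤ} {K : ℕ}
    (hf : ∀ a b, G.Adj a b → (f a - f b).natAbs ≤ K) (h : G.Reachable u v) :
    (f u - f v).natAbs ≤ K * G.dist u v := by
  obtain ⟨w, hw⟩ := h.exists_walk_length_eq_dist
  exact hw ▸ w.natAbs_sub_le_mul_length hf

theorem Reachable.exists_adj_apply_ne {β : Type*} (h : G.Reachable u v) (g : V → β)
    (hne : g u ≠ g v) : ∃ a b, G.Adj a b ∧ g a ≠ g b ∧ G.dist u a ≤ G.dist u v := by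
  classical
  obtain ⟨w, hw⟩ := h.exists_walk_length_eq_dist
  obtain ⟨d, hd, hfst, hsnd⟩ := w.exists_boundary_dart {a | g a = g u} rfl (Ne.symm hne)
  have ha := w.dart_fst_mem_support_of_mem_darts hd
  refine ⟨d.fst, d.snd, d.adj, fun h' => hsnd (h'.symm.trans hfst), ?_⟩
  calc G.dist u d.fst ≤ (w.takeUntil _ ha).length := dist_le _
    _ ≤ w.length := w.length_takeUntil_le_length ha
    _ = G.dist u v := hw

theorem Reachable.dist_map_le (φ : G →g G') (h : G.Reachable u v) :
    G'.dist (φ u) (φ v) ≤ G.dist u v := by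
  obtain ⟨w, hw⟩ := h.exists_walk_length_eq_dist
  exact hw ▸ (w.length_map φ) ▸ dist_le (w.map φ)

theorem Iso.dist_eq (φ : G ≃g G') (u v : V) : G'.dist (φ u) (φ v) = G.dist u v := by
  by_cases h : G.Reachable u v
  · refine le_antisymm (h.dist_map_le φ.toHom) ?_
    simpa using (h.map φ.toHom).dist_map_le φ.symm.toHom
  · rw [dist_eq_zero_of_not_reachable h,
      dist_eq_zero_of_not_reachable (Iso.reachable_iff.not.mpr h)]

end SimpleGraph

section Cayley

variable {G : Type*} [Group G] (X : Set G)

theorem cayley_adj_iff {u v : G} :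
    (cayley G X).Adj u v ↔ u ≠ v ∧ ((∃ x ∈ X, v = u * x) ∨ ∃ x ∈ X, u = v * x) :=
  SimpleGraph.fromRel_adj _ _ _

def cayleyMulLeft (g : G) : cayley G X ≃g cayley G X where
  toEquiv := Equiv.mulLeft g
  map_rel_iff' := by simp [cayley_adj_iff, mul_assoc]

theorem cayley_dist_mul_left (g u v : G) :
    (cayley G X).dist (g * u) (g * v) = (cayley G X).dist u v :=
  (cayleyMulLeft X g).dist_eq u v

theorem cayley_reachable_mul_left (g : G) {u v : G} (h : (cayley G X).Reachable u v) :
    (cayley G X).Reachable (g * u) (g * v) :=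
  h.map (cayleyMulLeft X g).toHom

theorem cayley_connected (hX : Subgroup.closure X = ⊤) : (cayley G X).Connected := by
  refine (SimpleGraph.connected_iff_exists_forall_reachable _).mpr ⟨1, fun g => ?_⟩
  have hg : g ∈ Subgroup.closure X := hX ▸ Subgroup.mem_top g
  induction hg using Subgroup.closure_induction with
  | mem x hx =>
    by_cases hx1 : x = 1
    · rw [hx1]
    · exact SimpleGraph.Adj.reachable <|
        (cayley_adj_iff X).mpr ⟨Ne.symm hx1, .inl ⟨x, hx, (one_mul x).symm⟩⟩
  | one => rfl
  | mul x y _ _ hx hy => exact hx.trans (by simpa using cayley_reachable_mul_left X x hy)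
  | inv x _ hx =>
    have := cayley_reachable_mul_left X x⁻¹ hx
    rw [mul_one, inv_mul_cancel] at this
    exact this.symm

end Cayley

theorem Int.lt_natAbs_sub_of_ediv_ne {a b : ℤ} {L : ℕ} (hL : 0 < L) (hne : a / L ≠ b / L)
    (hpar : a / L % 2 = b / L % 2) : L < (a - b).natAbs := by
  have hLz : (0 : ℤ) < L := by exact_mod_cast hL
  have ha₁ := Int.ediv_mul_le a hLz.ne'
  have ha₂ := Int.lt_ediv_add_one_mul_self a hLz
  have hb₁ := Int.ediv_mul_le b hLz.ne'
  have hb₂ := Int.lt_ediv_add_one_mul_self b hLz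
  rcases (by omega : a / L + 2 ≤ b / L ∨ b / L + 2 ≤ a / L) with h | h
  · have := mul_le_mul_of_nonneg_right h hLz.le
    rw [add_mul] at this ha₂
    omega
  · have := mul_le_mul_of_nonneg_right h hLz.le
    rw [add_mul] at this hb₂
    omega

namespace Lamplighter

def pos (g : Lamplighter) : ℤ := Multiplicative.toAdd g.right

def lamps (g : Lamplighter) : ℤ →₀ ZMod 2 := Multiplicative.toAdd g.left

theorem pos_mul (u v : Lamplighter) : pos (u * v) = pos u + pos v := rfl

theorem lamps_mul (u v : Lamplighter) (i : ℤ) :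
    lamps (u * v) i = lamps u i + lamps v (i - pos u) := rfl

theorem ext_of_pos_of_lamps {g h : Lamplighter} (hpos : pos g = pos h)
    (hlamps : lamps g = lamps h) : g = h :=
  SemidirectProduct.ext hlamps hpos

theorem lamps_ne_of_lamps_inv_mul_ne_zero {u v : Lamplighter} {q : ℤ}
    (hq : lamps (u⁻¹ * v) q ≠ 0) : lamps u (q + pos u) ≠ lamps v (q + pos u) := by
  intro h
  have := lamps_mul u (u⁻¹ * v) (q + pos u)
  rw [mul_inv_cancel_left, add_sub_cancel_right, ← h] at this
  exact hq (left_eq_add.mp this)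

def box (N : ℕ) : Set Lamplighter :=
  {g | (pos g).natAbs ≤ N ∧ ∀ p, lamps g p ≠ 0 → p.natAbs ≤ N}

theorem box_finite (N : ℕ) : (box N).Finite := by
  refine Set.Finite.of_injOn (f := fun g => (pos g, fun i : Set.Icc (-(N : ℤ)) N => lamps g i))
    (t := Set.Icc (-(N : ℤ)) N ×ˢ Set.univ) (fun g hg => ?_) (fun g hg h hh heq => ?_)
    ((Set.finite_Icc _ _).prod Set.finite_univ)
  · have := hg.1
    simp only [Set.mem_prod, Set.mem_Icc, Set.mem_univ, and_true]
    omega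
  · obtain ⟨hpos, hlamps⟩ := Prod.mk.inj heq
    refine ext_of_pos_of_lamps hpos (Finsupp.ext fun p => ?_)
    by_cases hp : p ∈ Set.Icc (-(N : ℤ)) N
    · exact congrFun hlamps ⟨p, hp⟩
    · have hout : ∀ k ∈ box N, lamps k p = 0 := fun k hk => by
        by_contra h0
        have := hk.2 p h0
        exact hp ⟨by omega, by omega⟩
      rw [hout g hg, hout h hh]

section Generators

variable (X : Finset Lamplighter)

def genRadius : ℕ :=
  X.sup fun x => max (pos x).natAbs ((lamps x).support.sup Int.natAbs)

variable {X}

theorem natAbs_pos_le_genRadius {x : Lamplighter} (hx : x ∈ X) :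
    (pos x).natAbs ≤ genRadius X :=
  Finset.le_sup_of_le hx (le_max_left _ _)

theorem natAbs_le_genRadius {x : Lamplighter} (hx : x ∈ X) {p : ℤ} (hp : lamps x p ≠ 0) :
    p.natAbs ≤ genRadius X :=
  Finset.le_sup_of_le hx <|
    (Finset.le_sup (f := Int.natAbs) (Finsupp.mem_support_iff.mpr hp)).trans (le_max_right _ _)

theorem natAbs_pos_sub_le_of_adj {a b : Lamplighter} (h : (cayley Lamplighter X).Adj a b) :
    (pos a - pos b).natAbs ≤ genRadius X := by
  obtain ⟨-, ⟨x, hx, rfl⟩ | ⟨x, hx, rfl⟩⟩ := (cayley_adj_iff _).mp h <;>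
  · have := natAbs_pos_le_genRadius hx
    rw [pos_mul]
    omega

theorem natAbs_sub_pos_le_of_adj {a b : Lamplighter} (h : (cayley Lamplighter X).Adj a b)
    {p : ℤ} (hp : lamps a p ≠ lamps b p) : (p - pos a).natAbs ≤ 2 * genRadius X := by
  obtain ⟨-, ⟨x, hx, rfl⟩ | ⟨x, hx, rfl⟩⟩ := (cayley_adj_iff _).mp h
  · have := natAbs_le_genRadius hx (p := p - pos a) fun h0 => hp (by rw [lamps_mul, h0, add_zero])
    omega
  · have := natAbs_le_genRadius hx (p := p - pos b) fun h0 => hp (by rw [lamps_mul, h0, add_zero])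
    have := natAbs_pos_le_genRadius hx
    rw [pos_mul]
    omega

theorem natAbs_pos_sub_le_mul_dist (hconn : (cayley Lamplighter X).Connected)
    (u v : Lamplighter) :
    (pos u - pos v).natAbs ≤ genRadius X * (cayley Lamplighter X).dist u v :=
  (hconn u v).natAbs_sub_le_mul_dist fun _ _ => natAbs_pos_sub_le_of_adj

theorem natAbs_sub_pos_le_of_lamps_ne (hconn : (cayley Lamplighter X).Connected)
    {u v : Lamplighter} {p : ℤ} (hp : lamps u p ≠ lamps v p) :
    (p - pos u).natAbs ≤ genRadius X * (cayley Lamplighter X).dist u v + 2 * genRadius X := by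
  obtain ⟨a, b, hab, hne, hdist⟩ := (hconn u v).exists_adj_apply_ne (fun w => lamps w p) hp
  have h₁ := natAbs_sub_pos_le_of_adj hab hne
  have h₂ := natAbs_pos_sub_le_mul_dist hconn u a
  have h₃ := Nat.mul_le_mul_left (genRadius X) hdist
  omega

end Generators

def block (L : ℕ) (g : Lamplighter) : ℤ := pos g / L

def farLamps (L R : ℕ) (g : Lamplighter) : ℤ →₀ ZMod 2 :=
  (lamps g).filter fun p => ¬ (block L g * L - R ≤ p ∧ p < block L g * L + L + R)

def cell (L R : ℕ) (g : Lamplighter) : ℤ × (ℤ →₀ ZMod 2) := (block L g, farLamps L R g)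

variable {L R : ℕ}

theorem block_mul_le_pos (hL : 0 < L) (g : Lamplighter) : block L g * L ≤ pos g :=
  Int.ediv_mul_le _ (by omega)

theorem pos_lt_block_mul_add (hL : 0 < L) (g : Lamplighter) : pos g < block L g * L + L := by
  have := Int.lt_ediv_add_one_mul_self (pos g) (b := L) (by omega)
  rwa [add_one_mul] at this

theorem inv_mul_mem_box_of_cell_eq (hL : 0 < L) {u v : Lamplighter}
    (h : cell L R u = cell L R v) : u⁻¹ * v ∈ box (L + R) := by
  obtain ⟨hblock, hfar⟩ := Prod.mk.inj h
  have hu₁ := block_mul_le_pos hL u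
  have hu₂ := pos_lt_block_mul_add hL u
  have hv₁ := block_mul_le_pos hL v
  have hv₂ := pos_lt_block_mul_add hL v
  have hpos := pos_mul u (u⁻¹ * v)
  rw [mul_inv_cancel_left] at hpos
  rw [← hblock] at hv₁ hv₂
  refine ⟨by omega, fun q hq => ?_⟩
  have hne := lamps_ne_of_lamps_inv_mul_ne_zero hq
  have hnear : block L u * L - R ≤ q + pos u ∧ q + pos u < block L u * L + L + R := by
    by_contra hout
    have := DFunLike.congr_fun hfar (q + pos u)
    rw [farLamps, farLamps, ← hblock, Finsupp.filter_apply, Finsupp.filter_apply,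
      if_pos hout, if_pos hout] at this
    exact hne this
  omega

theorem exists_lamps_ne_of_farLamps_ne (hL : 0 < L) {u v : Lamplighter}
    (hblock : block L u = block L v) (hne : farLamps L R u ≠ farLamps L R v) :
    ∃ p, lamps u p ≠ lamps v p ∧ R < (p - pos u).natAbs := by
  obtain ⟨p, hp⟩ := Finsupp.ne_iff.mp hne
  have hu₁ := block_mul_le_pos hL u
  have hu₂ := pos_lt_block_mul_add hL u
  by_cases hnear : block L u * L - R ≤ p ∧ p < block L u * L + L + R
  · rw [farLamps, farLamps, ← hblock, Finsupp.filter_apply, Finsupp.filter_apply,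
      if_neg (not_not.mpr hnear), if_neg (not_not.mpr hnear)] at hp
    exact absurd rfl hp
  · rw [farLamps, farLamps, ← hblock, Finsupp.filter_apply, Finsupp.filter_apply,
      if_pos hnear, if_pos hnear] at hp
    exact ⟨p, hp, by omega⟩

theorem lt_dist_of_cell_ne {X : Finset Lamplighter} (hconn : (cayley Lamplighter X).Connected)
    {m : ℕ} (hL : genRadius X * m < L) (hR : genRadius X * m + 2 * genRadius X ≤ R)
    {u v : Lamplighter} (hne : cell L R u ≠ cell L R v) (hpar : block L u % 2 = block L v % 2) :
    m < (cayley Lamplighter X).dist u v := by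
  refine Nat.lt_of_mul_lt_mul_left (a := genRadius X) ?_
  by_cases hblock : block L u = block L v
  · have hfar : farLamps L R u ≠ farLamps L R v := fun h => hne (by rw [cell, cell, hblock, h])
    obtain ⟨p, hp, hpR⟩ := exists_lamps_ne_of_farLamps_ne (by omega) hblock hfar
    have := natAbs_sub_pos_le_of_lamps_ne hconn hp
    omega
  · have := Int.lt_natAbs_sub_of_ediv_ne (by omega) hblock hpar
    have := natAbs_pos_sub_le_mul_dist hconn u v
    omega

end Lamplighter

open Lamplighter

/-- The lamplighter group has asymptotic dimension 1: asymptotic dimension at most 1,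
and the group is infinite (hence of asymptotic dimension exactly 1). -/
theorem lamplighter_asdim_one : GroupAsdimLE Lamplighter 1 ∧ Infinite Lamplighter := by
  refine ⟨fun X hX m _ => ?_, Infinite.of_injective _ SemidirectProduct.inr_injective⟩
  have hconn := cayley_connected _ hX
  set L := genRadius X * m + 1
  set R := genRadius X * m + 2 * genRadius X
  obtain ⟨D, hD⟩ := ((box_finite (L + R)).image ((cayley Lamplighter X).dist 1)).bddAbove
  refine ⟨_, cell L R, fun c => ⟨(c.1 % 2).toNat, by omega⟩, D, fun u v huv => ?_,
    fun u v hne hcol => lt_dist_of_cell_ne hconn (by omega) le_rfl hne ?_⟩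
  · rw [← cayley_dist_mul_left _ u⁻¹, inv_mul_cancel]
    exact hD ⟨_, inv_mul_mem_box_of_cell_eq (by omega) huv, rfl⟩
  · have := Fin.val_eq_of_eq hcol
    simp only [cell] at this
    omega
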